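/- arXiv:1509.07330 — 3 statements merged into one kernel-verified Lean document; each statement's English description precedes it below -/
import Mathlib

section
/- For any nonincreasing sequence of nonnegative valuations v_1 ≥ v_2 ≥ ... ≥ v_ℓ ≥ 0, the total value Σ_{k=1}^ℓ v_k (the revenue of perfect price discrimination) is at most H_ℓ times the best fixed-price revenue max_{j ∈ [1,ℓ]} j · v_j, where H_ℓ = Σ_{i=1}^ℓ 1/i. -/
open Finset

theorem sum_le_sum_one_div_mul_of_mul_le {s : Finset ℕ} (hs : ∀ k ∈ s, 0 < k) {v : ℕ → ℝ}
    {M : ℝ} (h : ∀ k ∈ s, (k : ℝ) * v k ≤ M) :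
    ∑ k ∈ s, v k ≤ (∑ k ∈ s, 1 / (k : ℝ)) * M := by
  rw [Finset.sum_mul]
  refine Finset.sum_le_sum fun k hk => ?_
  have hkpos : (0 : ℝ) < k := by exact_mod_cast hs k hk
  rw [one_div_mul_eq_div, le_div_iff₀ hkpos, mul_comm]
  exact h k hk

theorem stmt1_general (ℓ : ℕ) (v : ℕ → ℝ)
    (M : ℝ)
    (hM : IsGreatest {r : ℝ | ∃ j ∈ Finset.Icc 1 ℓ, r = (j : ℝ) * v j} M) :
    (∑ k ∈ Finset.Icc 1 ℓ, v k) ≤ (∑ i ∈ Finset.Icc 1 ℓ, 1 / (i : ℝ)) * M :=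
  sum_le_sum_one_div_mul_of_mul_le (fun _ hk => (Finset.mem_Icc.mp hk).1)
    fun k hk => hM.2 ⟨k, hk, rfl⟩

/-- Perfect price-discrimination revenue is at most `H_ℓ` times the best
fixed-price revenue `max_{j ∈ [1,ℓ]} j · v_j`. -/
theorem stmt1 (ℓ : ℕ) (hℓ : 1 ≤ ℓ) (v : ℕ → ℝ)
    (hnonneg : ∀ i, 1 ≤ i → 0 ≤ v i)
    (hmono : ∀ i, 1 ≤ i → v (i + 1) ≤ v i)
    (M : ℝ)
    (hM : IsGreatest {r : ℝ | ∃ j ∈ Finset.Icc 1 ℓ, r = (j : ℝ) * v j} M) :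
    (∑ k ∈ Finset.Icc 1 ℓ, v k) ≤ (∑ i ∈ Finset.Icc 1 ℓ, 1 / (i : ℝ)) * M :=
  stmt1_general ℓ v M hM
end

section
/- Let p : Fin T → ℝ be preannounced prices, c ≥ 0 a per-period unit storage cost, and suppose a rational consumer makes a positive purchase in period t. Then p t ≤ p t' + (t - t') · c for all t' < t. -/
open Finset

/-- Storage level after period `t` under purchases `q` and consumption `x`. -/
def storageLevel (q x : ℕ → ℕ) (t : ℕ) : ℤ :=
  ∑ s ∈ Finset.range (t + 1), ((q s : ℤ) - (x s : ℤ))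

/-- A plan is feasible if storage is never negative. -/
def FeasiblePlan (T : ℕ) (q x : ℕ → ℕ) : Prop :=
  ∀ t < T, 0 ≤ storageLevel q x t

/-- Total utility of a plan: consumption utility minus payments minus storage
costs, where `U x t` is the utility of consuming `x` units in period `t`. -/
noncomputable def planUtility (T : ℕ) (U : ℕ → ℕ → ℝ) (p : ℕ → ℝ) (c : ℝ)
    (q x : ℕ → ℕ) : ℝ :=
  ∑ t ∈ Finset.range T,
    (U (x t) t - p t * (q t : ℝ) - c * (storageLevel q x t : ℝ))

/-!
Buy one unit fewer in period `t` and one unit more in an earlier period `t'`,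
keeping consumption unchanged. Storage then rises by exactly one unit during the periods
`t', …, t - 1`, so the new plan is still feasible, and total utility changes by
`p t - p t' - (t - t') c`. Optimality of the original plan makes this change nonpositive.
-/

def movePurchase (q : ℕ → ℕ) (t' t : ℕ) : ℕ → ℕ :=
  fun s => if s = t' then q s + 1 else if s = t then q s - 1 else q s

section MovePurchase

variable {q x : ℕ → ℕ} {t' t : ℕ}

lemma cast_movePurchase {R : Type*} [AddCommGroupWithOne R] (htt : t' ≠ t) (hq : 0 < q t)
    (s : ℕ) :
    (movePurchase q t' t s : R) =
      q s + (if s = t' then 1 else 0) - (if s = t then 1 else 0) := by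
  unfold movePurchase
  split_ifs <;> simp_all [Nat.cast_sub hq]

lemma storageLevel_movePurchase (htt : t' < t) (hq : 0 < q t) (s : ℕ) :
    storageLevel (movePurchase q t' t) x s =
      storageLevel q x s + if s ∈ Ico t' t then 1 else 0 := by
  have hshift : storageLevel (movePurchase q t' t) x s = storageLevel q x s +
      ((∑ u ∈ range (s + 1), if u = t' then 1 else 0) -
        ∑ u ∈ range (s + 1), if u = t then 1 else 0) := by
    simp only [storageLevel, cast_movePurchase htt.ne hq, ← sum_sub_distrib, ← sum_add_distrib]
    exact sum_congr rfl fun _ _ ↦ by ring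
  rw [hshift, sum_ite_eq', sum_ite_eq']
  simp only [mem_range, mem_Ico]
  split_ifs <;> omega

lemma FeasiblePlan.movePurchase {T : ℕ} (hfeas : FeasiblePlan T q x) (htt : t' < t)
    (hq : 0 < q t) : FeasiblePlan T (movePurchase q t' t) x := by
  intro s hs
  rw [storageLevel_movePurchase htt hq]
  have := hfeas s hs
  split_ifs <;> omega

lemma planUtility_movePurchase {T : ℕ} (U : ℕ → ℕ → ℝ) (p : ℕ → ℝ) (c : ℝ)
    (htt : t' < t) (ht : t < T) (hq : 0 < q t) :
    planUtility T U p c (movePurchase q t' t) x =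
      planUtility T U p c q x + (p t - p t') - ((t : ℝ) - t') * c := by
  have hstored : ∑ s ∈ range T, (if s ∈ Ico t' t then c else 0) = ((t : ℝ) - t') * c := by
    rw [← sum_filter, sum_const, nsmul_eq_mul, filter_mem_eq_inter,
      inter_eq_right.mpr fun s hs ↦ mem_range.mpr ((mem_Ico.mp hs).2.trans ht),
      Nat.card_Ico, Nat.cast_sub htt.le]
  have hshift : planUtility T U p c (movePurchase q t' t) x = planUtility T U p c q x +
      ((∑ s ∈ range T, if s = t then p s else 0) -
        (∑ s ∈ range T, if s = t' then p s else 0) -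
        ∑ s ∈ range T, if s ∈ Ico t' t then c else 0) := by
    simp only [planUtility, storageLevel_movePurchase htt hq, cast_movePurchase htt.ne hq,
      ← sum_sub_distrib, ← sum_add_distrib]
    refine sum_congr rfl fun s _ ↦ ?_
    split_ifs <;> push_cast <;> ring
  rw [hshift, hstored, sum_ite_eq', sum_ite_eq', if_pos (mem_range.mpr ht),
    if_pos (mem_range.mpr (htt.trans ht))]
  ring

end MovePurchase

theorem stmt6_general (T : ℕ) (U : ℕ → ℕ → ℝ) (p : ℕ → ℝ) (c : ℝ)
    (q x : ℕ → ℕ) (hfeas : FeasiblePlan T q x)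
    (hopt : ∀ q' x' : ℕ → ℕ, FeasiblePlan T q' x' →
      planUtility T U p c q' x' ≤ planUtility T U p c q x)
    (t : ℕ) (ht : t < T) (hq : 0 < q t) :
    ∀ t' < t, p t ≤ p t' + ((t : ℝ) - (t' : ℝ)) * c := by
  intro t' htt
  have hmove := hopt _ x (hfeas.movePurchase htt hq)
  rw [planUtility_movePurchase U p c htt ht hq] at hmove
  linarith

/-- If a rational consumer (one whose plan maximizes utility among feasible
plans) makes a positive purchase in period `t`, then
`p t ≤ p t' + (t - t') · c` for all `t' < t`. -/
theorem stmt6 (T : ℕ) (U : ℕ → ℕ → ℝ) (p : ℕ → ℝ) (c : ℝ) (hc : 0 ≤ c)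
    (q x : ℕ → ℕ) (hfeas : FeasiblePlan T q x)
    (hopt : ∀ q' x' : ℕ → ℕ, FeasiblePlan T q' x' →
      planUtility T U p c q' x' ≤ planUtility T U p c q x)
    (t : ℕ) (ht : t < T) (hq : 0 < q t) :
    ∀ t' < t, p t ≤ p t' + ((t : ℝ) - (t' : ℝ)) * c :=
  stmt6_general T U p c q x hfeas hopt t ht hq
end

section
/- For the two-period single-buyer case with linear storage costs: for any nonincreasing marginal utility functions V(·,1), V(·,2) : ℕ → ℝ≥0 and storage cost c ≥ 0, and any prices (p_1, p_2) with a consumer best response involving positive storage S_1 > 0, the modified prices (p_1, p_1 + c) yield retailer revenue at least as large, with a consumer best response using zero storage; in particular, under an optimal preannounced pricing strategy there exists an optimal price sequence inducing zero storage. -/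
open Finset

/-- Utility of consuming `x` units in a period with marginal utilities `V`. -/
noncomputable def cumUtil (V : ℕ → ℝ) (x : ℕ) : ℝ :=
  ∑ i ∈ Finset.Icc 1 x, V i

/-- A two-period plan `(q1, x1, q2, x2)` is feasible if consumption does not
exceed available stock (storage `S1 = q1 - x1 ≥ 0`, and `x2 ≤ S1 + q2`). -/
def Feasible2 (q1 x1 q2 x2 : ℕ) : Prop := x1 ≤ q1 ∧ x2 ≤ (q1 - x1) + q2

/-- Buyer utility of a two-period plan under prices `(p1, p2)` and storage
cost `c`. -/
noncomputable def util2 (V1 V2 : ℕ → ℝ) (c p1 p2 : ℝ) (q1 x1 q2 x2 : ℕ) : ℝ :=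
  cumUtil V1 x1 + cumUtil V2 x2 - p1 * q1 - p2 * q2 - c * ((q1 : ℝ) - x1)

/-- Two-period single-buyer case of Lemma "no storage under preannounced
pricing": for nonincreasing nonnegative marginal utilities and linear storage
cost `c ≥ 0`, if a consumer best response to prices `(p1, p2)` uses positive
storage, then the prices `(p1, p1 + c)` admit a consumer best response with
zero storage whose revenue is at least as large. -/
theorem stmt12 (V1 V2 : ℕ → ℝ)
    (h1nonneg : ∀ i, 0 ≤ V1 i) (h2nonneg : ∀ i, 0 ≤ V2 i)
    (h1mono : ∀ i, V1 (i + 1) ≤ V1 i) (h2mono : ∀ i, V2 (i + 1) ≤ V2 i)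
    (c : ℝ) (hc : 0 ≤ c) (p1 p2 : ℝ)
    (q1 x1 q2 x2 : ℕ) (hfeas : Feasible2 q1 x1 q2 x2)
    (hopt : ∀ q1' x1' q2' x2' : ℕ, Feasible2 q1' x1' q2' x2' →
      util2 V1 V2 c p1 p2 q1' x1' q2' x2' ≤ util2 V1 V2 c p1 p2 q1 x1 q2 x2)
    (hstore : x1 < q1) :
    ∃ q1' x1' q2' x2' : ℕ, Feasible2 q1' x1' q2' x2' ∧
      q1' = x1' ∧
      (∀ q1'' x1'' q2'' x2'' : ℕ, Feasible2 q1'' x1'' q2'' x2'' →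
        util2 V1 V2 c p1 (p1 + c) q1'' x1'' q2'' x2'' ≤
          util2 V1 V2 c p1 (p1 + c) q1' x1' q2' x2') ∧
      p1 * q1 + p2 * q2 ≤ p1 * q1' + (p1 + c) * q2' := by
  obtain ⟨hx1q1, hx2⟩ := hfeas
  have hx1c : (x1 : ℝ) ≤ q1 := by exact_mod_cast hx1q1
  have hx2c : (x2 : ℝ) ≤ ((q1 : ℝ) - x1) + q2 := by
    have h := hx2
    have : (x2 : ℝ) ≤ ((q1 - x1 + q2 : ℕ) : ℝ) := by exact_mod_cast h
    rwa [Nat.cast_add, Nat.cast_sub hx1q1] at this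
  -- 0 ≤ p1 + c
  have h0 : 0 ≤ p1 + c := by
    have h := hopt (q1 + 1) x1 q2 x2 ⟨by omega, by omega⟩
    simp only [util2] at h
    push_cast at h
    linarith
  -- p1 + c ≤ p2
  have hp2 : p1 + c ≤ p2 := by
    have h := hopt (q1 - 1) x1 (q2 + 1) x2 ⟨by omega, by omega⟩
    simp only [util2] at h
    rw [Nat.cast_sub (by omega : 1 ≤ q1)] at h
    push_cast at h
    linarith
  -- p2 * q2 = (p1+c) * q2
  have hq2eq : p2 * q2 = (p1 + c) * q2 := by
    rcases Nat.eq_zero_or_pos q2 with h | hpos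
    · simp [h]
    · have h := hopt (q1 + 1) x1 (q2 - 1) x2 ⟨by omega, by omega⟩
      simp only [util2] at h
      rw [Nat.cast_sub (by omega : 1 ≤ q2)] at h
      push_cast at h
      have : p2 = p1 + c := by linarith
      rw [this]
  -- period-1 surplus maximal at x1
  have g1max : ∀ y : ℕ, cumUtil V1 y - p1 * y ≤ cumUtil V1 x1 - p1 * x1 := by
    intro y
    have h := hopt (q1 - x1 + y) y q2 x2 ⟨by omega, by omega⟩
    simp only [util2] at h
    rw [Nat.cast_add, Nat.cast_sub hx1q1] at h
    linarith
  -- old utility bounded by zero-storage decomposition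
  have hold : util2 V1 V2 c p1 p2 q1 x1 q2 x2 ≤
      (cumUtil V1 x1 - p1 * x1) + (cumUtil V2 x2 - (p1 + c) * x2) := by
    simp only [util2]
    have hq2nn : (0 : ℝ) ≤ q2 := Nat.cast_nonneg q2
    nlinarith [mul_le_mul_of_nonneg_right hp2 hq2nn,
      mul_le_mul_of_nonneg_left hx2c h0]
  -- period-2 surplus at effective price p1+c maximal at x2
  have h2max : ∀ e : ℕ, cumUtil V2 e - (p1 + c) * e ≤
      cumUtil V2 x2 - (p1 + c) * x2 := by
    intro e
    have h := hopt (x1 + e) x1 0 e ⟨by omega, by omega⟩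
    have holdu := hold
    simp only [util2] at h holdu
    push_cast at h
    linarith
  -- revenue comparison
  have hrev : p1 * q1 + p2 * q2 ≤ p1 * x1 + (p1 + c) * x2 := by
    rw [hq2eq]
    rcases Nat.lt_or_ge x2 (q1 - x1 + q2) with hlt | hge
    · -- wasteful storage forces p1 + c ≤ 0, hence p1 + c = 0, p1 = -c ≤ 0
      have h := hopt (q1 - 1) x1 q2 x2 ⟨by omega, by omega⟩
      simp only [util2] at h
      rw [Nat.cast_sub (by omega : 1 ≤ q1)] at h
      push_cast at h
      have hle : p1 + c ≤ 0 := by linarith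
      have hpc0 : p1 + c = 0 := le_antisymm hle h0
      have hp1 : p1 ≤ 0 := by linarith
      have : (x1 : ℝ) ≤ q1 := hx1c
      nlinarith
    · have heq : x2 = q1 - x1 + q2 := le_antisymm hx2 hge
      have heqc : (x2 : ℝ) = ((q1 : ℝ) - x1) + q2 := by
        rw [heq, Nat.cast_add, Nat.cast_sub hx1q1]
      rw [heqc]
      nlinarith
  refine ⟨x1, x1, x2, x2, ⟨le_refl _, by omega⟩, rfl, ?_, hrev⟩
  intro a b d e ⟨hab, he⟩
  have habc : (b : ℝ) ≤ a := by exact_mod_cast hab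
  have hec : (e : ℝ) ≤ ((a : ℝ) - b) + d := by
    have : (e : ℝ) ≤ ((a - b + d : ℕ) : ℝ) := by exact_mod_cast he
    rwa [Nat.cast_add, Nat.cast_sub hab] at this
  simp only [util2]
  have hg1 := g1max b
  have hh2 := h2max e
  nlinarith [mul_le_mul_of_nonneg_left hec h0]
end
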